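/- Assume ρ₀ ≠ 0 and that S(x,t) ∩ supp ρ₀ is nonempty for every x ∈ ℝ and t > 0, and define y^*(x,t) = lim_{ε→0+} y_*(x+ε,t). Then for every (x,t) with t > 0: lim_{ε→0+} y_*(x−ε,t) = y_*(x,t), lim_{ε→0+} y^*(x−ε,t) = y_*(x,t), and lim_{ε→0+} y^*(x+ε,t) = y^*(x,t). -/

import Mathlib

open MeasureTheory Set Filter Topology

noncomputable def Mtot (ρ : Measure ℝ) : ℝ := (ρ Set.univ).toReal

noncomputable def m0 (ρ : Measure ℝ) (y : ℝ) : ℝ := (ρ (Set.Iio y)).toReal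

noncomputable def m0p (ρ : Measure ℝ) (y : ℝ) : ℝ := (ρ (Set.Iic y)).toReal

/-- `m̃₀(y) = (1/2)(ρ((−∞,y)) + ρ((−∞,y]) − M)`. -/
noncomputable def mtilde (ρ : Measure ℝ) (y : ℝ) : ℝ :=
  (m0 ρ y + m0p ρ y - Mtot ρ) / 2

/-- topological support of the measure. -/
def msupp (ρ : Measure ℝ) : Set ℝ := {x | ∀ U ∈ nhds x, 0 < ρ U}

/-- The generalized potential `F(y;x,t)`. -/
noncomputable def Fpot (ρ : Measure ℝ) (u₀ : ℝ → ℝ) (τ y x t : ℝ) : ℝ :=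
  ∫ η in Set.Iio y,
    (η + u₀ η * (τ * (1 - Real.exp (-t / τ)))
       + mtilde ρ η * (τ ^ 2 - τ ^ 2 * Real.exp (-t / τ) - τ * t) - x) ∂ρ

/-- The right-limit value `F(y+;x,t)` (integral over `(−∞,y]`). -/
noncomputable def FpotP (ρ : Measure ℝ) (u₀ : ℝ → ℝ) (τ y x t : ℝ) : ℝ :=
  ∫ η in Set.Iic y,
    (η + u₀ η * (τ * (1 - Real.exp (-t / τ)))
       + mtilde ρ η * (τ ^ 2 - τ ^ 2 * Real.exp (-t / τ) - τ * t) - x) ∂ρ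

/-- `ν(x,t) = inf_y F(y;x,t)`. -/
noncomputable def nuEP (ρ : Measure ℝ) (u₀ : ℝ → ℝ) (τ x t : ℝ) : ℝ :=
  ⨅ y : ℝ, Fpot ρ u₀ τ y x t

/-- `S(x,t)`: points approachable by sequences along which `F` tends to `ν(x,t)`. -/
def Sset (ρ : Measure ℝ) (u₀ : ℝ → ℝ) (τ x t : ℝ) : Set ℝ :=
  {y | ∃ yn : ℕ → ℝ, Tendsto yn atTop (𝓝 y) ∧
    Tendsto (fun n => Fpot ρ u₀ τ (yn n) x t) atTop (𝓝 (nuEP ρ u₀ τ x t))}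

/-- `y_*(x,t) = inf (S(x,t) ∩ supp ρ₀)`. -/
noncomputable def ystar (ρ : Measure ℝ) (u₀ : ℝ → ℝ) (τ x t : ℝ) : ℝ :=
  sInf (Sset ρ u₀ τ x t ∩ msupp ρ)

/-- initial speed `c(y;x,t)` of the characteristic connecting `(y,0)` and `(x,t)`. -/
noncomputable def cspeed (ρ : Measure ℝ) (τ y x t : ℝ) : ℝ :=
  (x - y) / (τ * (1 - Real.exp (-t / τ)))
    - mtilde ρ y * (τ - t / (1 - Real.exp (-t / τ)))

/-- abstract potential -/
noncomputable def Fg (ρ : Measure ℝ) (g : ℝ → ℝ) (y x : ℝ) : ℝ :=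
  ∫ η in Set.Iio y, (g η - x) ∂ρ

noncomputable def nug (ρ : Measure ℝ) (g : ℝ → ℝ) (x : ℝ) : ℝ := ⨅ y : ℝ, Fg ρ g y x

def Sg (ρ : Measure ℝ) (g : ℝ → ℝ) (x : ℝ) : Set ℝ :=
  {y | ∃ yn : ℕ → ℝ, Tendsto yn atTop (𝓝 y) ∧
    Tendsto (fun n => Fg ρ g (yn n) x) atTop (𝓝 (nug ρ g x))}

noncomputable def ysg (ρ : Measure ℝ) (g : ℝ → ℝ) (x : ℝ) : ℝ :=
  sInf (Sg ρ g x ∩ msupp ρ)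

section Abstract

variable (ρ : Measure ℝ) [IsFiniteMeasure ρ] (g : ℝ → ℝ) (hg : Integrable g ρ)

lemma m0_nonneg (y : ℝ) : 0 ≤ m0 ρ y := ENNReal.toReal_nonneg

lemma m0_mono : Monotone (m0 ρ) := fun y z h =>
  ENNReal.toReal_mono (measure_ne_top ρ _) (measure_mono (Set.Iio_subset_Iio h))

lemma m0_le_Mtot (y : ℝ) : m0 ρ y ≤ Mtot ρ :=
  ENNReal.toReal_mono (measure_ne_top ρ _) (measure_mono (Set.subset_univ _))

lemma Mtot_nonneg : 0 ≤ Mtot ρ := ENNReal.toReal_nonneg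

lemma m0p_nonneg (y : ℝ) : 0 ≤ m0p ρ y := ENNReal.toReal_nonneg

lemma m0p_le_Mtot (y : ℝ) : m0p ρ y ≤ Mtot ρ :=
  ENNReal.toReal_mono (measure_ne_top ρ _) (measure_mono (Set.subset_univ _))

lemma m0_le_m0p (y : ℝ) : m0 ρ y ≤ m0p ρ y :=
  ENNReal.toReal_mono (measure_ne_top ρ _) (measure_mono Set.Iio_subset_Iic_self)

lemma abs_mtilde_le (y : ℝ) : |mtilde ρ y| ≤ Mtot ρ := by
  have h1 := m0_nonneg ρ y
  have h2 := m0_le_Mtot ρ y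
  have h3 := m0p_nonneg ρ y
  have h4 := m0p_le_Mtot ρ y
  rw [abs_le, mtilde]
  constructor <;> nlinarith [Mtot_nonneg ρ]

lemma mtilde_measurable : Measurable (mtilde ρ) := by
  have h1 : Measurable (m0 ρ) := (m0_mono ρ).measurable
  have h2 : Measurable (m0p ρ) := Monotone.measurable (fun y z h =>
    ENNReal.toReal_mono (measure_ne_top ρ _) (measure_mono (Set.Iic_subset_Iic.2 h)))
  exact ((h1.add h2).sub measurable_const).div_const 2

variable {g}

include hg

lemma FgInt (x : ℝ) : Integrable (fun η => g η - x) ρ := hg.sub (integrable_const x)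

lemma FgIntOn (x : ℝ) (s : Set ℝ) : IntegrableOn (fun η => g η - x) s ρ :=
  (FgInt ρ hg x).integrableOn

lemma Fg_sub (y x x' : ℝ) : Fg ρ g y x - Fg ρ g y x' = (x' - x) * m0 ρ y := by
  rw [Fg, Fg, ← integral_sub (FgIntOn ρ hg x _) (FgIntOn ρ hg x' _)]
  have : (fun η => (g η - x) - (g η - x')) = fun _ : ℝ => x' - x := by funext η; ring
  rw [this, setIntegral_const, smul_eq_mul, m0]
  simp only [Measure.real]; ring

lemma abs_Fg_sub (y x x' : ℝ) : |Fg ρ g y x - Fg ρ g y x'| ≤ Mtot ρ * |x - x'| := by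
  rw [Fg_sub ρ hg, abs_mul]
  have h1 : |m0 ρ y| ≤ Mtot ρ := by
    rw [abs_of_nonneg (m0_nonneg ρ y)]; exact m0_le_Mtot ρ y
  have h2 : |x' - x| = |x - x'| := abs_sub_comm _ _
  calc |x' - x| * |m0 ρ y| ≤ |x - x'| * Mtot ρ := by
        rw [h2]; exact mul_le_mul_of_nonneg_left h1 (abs_nonneg _)
    _ = Mtot ρ * |x - x'| := mul_comm _ _

lemma Fg_bddBelow (x : ℝ) : BddBelow (Set.range fun y => Fg ρ g y x) := by
  refine ⟨-∫ η, |g η - x| ∂ρ, ?_⟩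
  rintro v ⟨y, rfl⟩
  have h1 : |Fg ρ g y x| ≤ ∫ η in Set.Iio y, |g η - x| ∂ρ := by
    simpa [Real.norm_eq_abs, Fg] using
      norm_integral_le_integral_norm (μ := ρ.restrict (Set.Iio y)) (f := fun η => g η - x)
  have h2 : ∫ η in Set.Iio y, |g η - x| ∂ρ ≤ ∫ η, |g η - x| ∂ρ :=
    setIntegral_le_integral (FgInt ρ hg x).abs (Eventually.of_forall fun η => abs_nonneg _)
  have := neg_abs_le (Fg ρ g y x)
  simp only
  linarith

lemma nug_le (x y : ℝ) : nug ρ g x ≤ Fg ρ g y x := ciInf_le (Fg_bddBelow ρ hg x) y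

lemma nug_lip (x x' : ℝ) : |nug ρ g x - nug ρ g x'| ≤ Mtot ρ * |x - x'| := by
  have key : ∀ a b : ℝ, nug ρ g a - nug ρ g b ≤ Mtot ρ * |a - b| := by
    intro a b
    have h : nug ρ g a - Mtot ρ * |a - b| ≤ nug ρ g b := by
      refine le_ciInf fun y => ?_
      have h1 := nug_le ρ hg a y
      have h2 := abs_Fg_sub ρ hg y a b
      have := abs_le.1 h2
      linarith [this.1, this.2]
    linarith
  have h1 := key x x'
  have h2 := key x' x
  rw [abs_sub_comm x' x] at h2
  rw [abs_le]; constructor <;> linarith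

/-- KEY closure lemma -/
lemma Sg_key {x : ℝ} {xn yn : ℕ → ℝ} {L : ℝ}
    (hx : Tendsto xn atTop (𝓝 x)) (hy : Tendsto yn atTop (𝓝 L))
    (hS : ∀ n, yn n ∈ Sg ρ g (xn n)) : L ∈ Sg ρ g x := by
  have hchoice : ∀ n : ℕ, ∃ z : ℝ, dist z (yn n) < 1 / (n + 1) ∧
      dist (Fg ρ g z (xn n)) (nug ρ g (xn n)) < 1 / (n + 1) := by
    intro n
    obtain ⟨w, hw1, hw2⟩ := hS n
    have hpos : (0 : ℝ) < 1 / (n + 1) := by positivity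
    have e1 := (Metric.tendsto_nhds.1 hw1) _ hpos
    have e2 := (Metric.tendsto_nhds.1 hw2) _ hpos
    obtain ⟨k, hk⟩ := (e1.and e2).exists
    exact ⟨w k, hk.1, hk.2⟩
  choose z hz1 hz2 using hchoice
  have hn1 : Tendsto (fun n : ℕ => 1 / ((n : ℝ) + 1)) atTop (𝓝 0) :=
    tendsto_one_div_add_atTop_nhds_zero_nat
  have hzL : Tendsto z atTop (𝓝 L) := by
    rw [tendsto_iff_dist_tendsto_zero]
    refine squeeze_zero' (g := fun n : ℕ => dist (z n) (yn n) + dist (yn n) L)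
      (Eventually.of_forall fun n => dist_nonneg)
      (Eventually.of_forall fun n => ?_) ?_
    · exact dist_triangle (z n) (yn n) L
    · have hyd : Tendsto (fun n => dist (yn n) L) atTop (𝓝 0) :=
        tendsto_iff_dist_tendsto_zero.1 hy
      have := Tendsto.add (squeeze_zero' (Eventually.of_forall fun n => dist_nonneg)
        (Eventually.of_forall fun n => (hz1 n).le) hn1) hyd
      simpa using this
  refine ⟨z, hzL, ?_⟩
  rw [tendsto_iff_dist_tendsto_zero]
  have hxd : Tendsto (fun n => |xn n - x|) atTop (𝓝 0) := by
    have := tendsto_iff_dist_tendsto_zero.1 hx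
    simpa [Real.dist_eq] using this
  refine squeeze_zero'
    (g := fun n : ℕ => Mtot ρ * |x - xn n| + 1 / (n + 1) + Mtot ρ * |xn n - x|)
    (Eventually.of_forall fun n => dist_nonneg)
    (Eventually.of_forall fun n => ?_) ?_
  · have t1 : dist (Fg ρ g (z n) x) (Fg ρ g (z n) (xn n)) ≤ Mtot ρ * |x - xn n| := by
      rw [Real.dist_eq]; exact abs_Fg_sub ρ hg _ _ _
    have t2 := (hz2 n).le
    have t3 : dist (nug ρ g (xn n)) (nug ρ g x) ≤ Mtot ρ * |xn n - x| := by
      rw [Real.dist_eq]; exact nug_lip ρ hg _ _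
    calc dist (Fg ρ g (z n) x) (nug ρ g x)
        ≤ dist (Fg ρ g (z n) x) (Fg ρ g (z n) (xn n)) +
          dist (Fg ρ g (z n) (xn n)) (nug ρ g (xn n)) +
          dist (nug ρ g (xn n)) (nug ρ g x) := dist_triangle4 _ _ _ _
      _ ≤ Mtot ρ * |x - xn n| + 1 / (n + 1) + Mtot ρ * |xn n - x| := by
          gcongr
  · have hx1 : Tendsto (fun n => Mtot ρ * |x - xn n|) atTop (𝓝 0) := by
      have : Tendsto (fun n => |x - xn n|) atTop (𝓝 0) := by
        have := hxd
        simpa [abs_sub_comm] using this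
      simpa using this.const_mul (Mtot ρ)
    have hx2 : Tendsto (fun n => Mtot ρ * |xn n - x|) atTop (𝓝 0) := by
      simpa using hxd.const_mul (Mtot ρ)
    have := (hx1.add hn1).add hx2
    simpa using this

omit hg

lemma msupp_mem_of_tendsto {yn : ℕ → ℝ} {L : ℝ} (h : Tendsto yn atTop (𝓝 L))
    (hm : ∀ n, yn n ∈ msupp ρ) : L ∈ msupp ρ := by
  intro U hU
  obtain ⟨V, hVU, hVo, hLV⟩ := mem_nhds_iff.1 hU
  have := (h.eventually (hVo.mem_nhds hLV)).exists
  obtain ⟨n, hn⟩ := this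
  exact lt_of_lt_of_le (hm n V (hVo.mem_nhds hn)) (measure_mono hVU)

include hg

variable {C : ℝ} (hgC : ∀ᵐ η ∂ρ, g η ≤ η + C)

include hgC

lemma int_le_neg (x : ℝ) {s : Set ℝ} (hs : MeasurableSet s) (hss : s ⊆ Set.Iio (x - C - 1)) :
    ∫ η in s, (g η - x) ∂ρ ≤ -(ρ s).toReal := by
  have hb : (fun η => g η - x) ≤ᶠ[ae (ρ.restrict s)] fun _ => (-1 : ℝ) := by
    rw [EventuallyLE, ae_restrict_iff' hs]
    refine hgC.mono fun η hη hηs => ?_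
    have : η < x - C - 1 := hss hηs
    linarith
  calc ∫ η in s, (g η - x) ∂ρ ≤ ∫ _ in s, (-1 : ℝ) ∂ρ :=
        setIntegral_mono_ae_restrict (FgIntOn ρ hg x s) (integrableOn_const (measure_ne_top ρ s)) hb
    _ = -(ρ s).toReal := by rw [setIntegral_const]; simp [Measure.real]

lemma Sg_zero_meas {x y z : ℝ} (hy : y ∈ Sg ρ g x) (hyz : y < z) (hzY : z ≤ x - C - 1) :
    ρ (Set.Ioo ((y + z) / 2) z) = 0 := by
  obtain ⟨yn, hyn, hF⟩ := hy
  set y' := (y + z) / 2 with hy'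
  have hyy' : y < y' := by rw [hy']; linarith
  have hy'z : y' < z := by rw [hy']; linarith
  have hev : ∀ᶠ n in atTop, yn n < y' := hyn.eventually_lt_const hyy'
  set r := (ρ (Set.Ioo y' z)).toReal with hr
  have hineq : ∀ᶠ n in atTop, Fg ρ g z x + r ≤ Fg ρ g (yn n) x := by
    refine hev.mono fun n hn => ?_
    have hsplit : Fg ρ g z x = Fg ρ g (yn n) x + ∫ η in Set.Ico (yn n) z, (g η - x) ∂ρ := by
      rw [Fg, Fg, ← setIntegral_union]
      · rw [Set.Iio_union_Ico_eq_Iio (le_of_lt (hn.trans hy'z))]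
      · exact Set.disjoint_left.2 fun a ha ha' => absurd ha'.1 (not_le.2 ha)
      · exact measurableSet_Ico
      · exact FgIntOn ρ hg x _
      · exact FgIntOn ρ hg x _
    have h1 : ∫ η in Set.Ico (yn n) z, (g η - x) ∂ρ ≤ -(ρ (Set.Ico (yn n) z)).toReal :=
      int_le_neg ρ hg hgC x measurableSet_Ico
        (fun a ha => lt_of_lt_of_le ha.2 hzY)
    have h2 : r ≤ (ρ (Set.Ico (yn n) z)).toReal := by
      refine ENNReal.toReal_mono (measure_ne_top ρ _) (measure_mono ?_)
      exact fun a ha => ⟨le_of_lt (lt_of_le_of_lt hn.le ha.1), ha.2⟩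
    linarith [hsplit]
  have hge : Fg ρ g z x + r ≤ nug ρ g x := ge_of_tendsto hF hineq
  have := nug_le ρ hg x z
  have hr0 : r ≤ 0 := by linarith
  have : r = 0 := le_antisymm hr0 ENNReal.toReal_nonneg
  rw [hr] at this
  exact (ENNReal.toReal_eq_zero_iff _).1 this |>.resolve_right (measure_ne_top ρ _)

lemma Sg_bddBelow (x : ℝ) : BddBelow (Sg ρ g x ∩ msupp ρ) := by
  set Y₀ := x - C - 1 with hY₀
  by_cases h : ∃ y₀ ∈ Sg ρ g x ∩ msupp ρ, y₀ < Y₀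
  · obtain ⟨y₀, hy₀, hy₀Y⟩ := h
    refine ⟨y₀, fun y hy => ?_⟩
    by_contra hc
    push_neg at hc
    -- y < y₀ < Y₀, y ∈ Sg, y₀ ∈ msupp
    set z := min Y₀ (y₀ + (y₀ - y) / 2) with hz
    have hyz : y < z := lt_min (hc.trans hy₀Y) (by linarith)
    have hzY : z ≤ Y₀ := min_le_left _ _
    have hmeas := Sg_zero_meas ρ hg hgC hy.1 hyz hzY
    have h1 : (y + z) / 2 < y₀ := by
      have hz2' : z ≤ y₀ + (y₀ - y) / 2 := min_le_right _ _
      linarith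
    have h2 : y₀ < z := lt_min hy₀Y (by linarith)
    have := hy₀.2 (Set.Ioo ((y + z) / 2) z) (isOpen_Ioo.mem_nhds ⟨h1, h2⟩)
    rw [hmeas] at this
    exact lt_irrefl 0 this
  · push_neg at h
    exact ⟨Y₀, fun y hy => h y hy⟩

lemma ysg_mem (x : ℝ) (hne : (Sg ρ g x ∩ msupp ρ).Nonempty) :
    ysg ρ g x ∈ Sg ρ g x ∩ msupp ρ := by
  have hbdd := Sg_bddBelow ρ hg hgC x
  set m := ysg ρ g x with hm
  have hchoice : ∀ n : ℕ, ∃ y ∈ Sg ρ g x ∩ msupp ρ, y < m + 1 / (n + 1) := by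
    intro n
    refine exists_lt_of_csInf_lt hne ?_
    have h0 : (0:ℝ) < 1 / (n + 1) := by positivity
    have hms : m = sInf (Sg ρ g x ∩ msupp ρ) := hm
    linarith
  choose yn h1 h2 using hchoice
  have hge : ∀ n, m ≤ yn n := fun n => csInf_le hbdd (h1 n)
  have hyn : Tendsto yn atTop (𝓝 m) := by
    refine tendsto_of_tendsto_of_tendsto_of_le_of_le (g := fun _ => m)
      (h := fun n : ℕ => m + 1 / (n + 1)) tendsto_const_nhds ?_
      hge (fun n => (h2 n).le)
    have := tendsto_one_div_add_atTop_nhds_zero_nat.const_add m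
    simpa using this
  exact ⟨Sg_key ρ hg tendsto_const_nhds hyn (fun n => (h1 n).1),
    msupp_mem_of_tendsto ρ hyn (fun n => (h1 n).2)⟩

omit hgC

lemma Sg_mono_key {x x' y y' : ℝ} (hxx' : x ≤ x') (hy : y ∈ Sg ρ g x)
    (hy' : y' ∈ Sg ρ g x') (hlt : y' < y) : y' ∈ Sg ρ g x := by
  obtain ⟨yn, hyn, hFn⟩ := hy
  obtain ⟨zn, hzn, hGn⟩ := hy'
  refine ⟨zn, hzn, ?_⟩
  have hev : ∀ᶠ n in atTop, zn n ≤ yn n := by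
    have e1 := hzn.eventually_lt_const (show y' < (y' + y) / 2 by linarith)
    have e2 := hyn.eventually_const_lt (show (y' + y) / 2 < y by linarith)
    filter_upwards [e1, e2] with n h1 h2
    linarith
  refine tendsto_of_tendsto_of_tendsto_of_le_of_le' (g := fun _ => nug ρ g x)
    (h := fun n => Fg ρ g (yn n) x + (Fg ρ g (zn n) x' - nug ρ g x'))
    tendsto_const_nhds ?_ (Eventually.of_forall fun n => nug_le ρ hg x (zn n)) ?_
  · have h5 : Tendsto (fun n => Fg ρ g (zn n) x' - nug ρ g x') atTop
        (𝓝 (nug ρ g x' - nug ρ g x')) := hGn.sub tendsto_const_nhds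
    have := hFn.add h5
    simpa using this
  · refine hev.mono fun n hn => ?_
    have e1 : Fg ρ g (zn n) x = Fg ρ g (zn n) x' + (x' - x) * m0 ρ (zn n) := by
      have := Fg_sub ρ hg (zn n) x x'; linarith
    have e2 : Fg ρ g (yn n) x' = Fg ρ g (yn n) x - (x' - x) * m0 ρ (yn n) := by
      have := Fg_sub ρ hg (yn n) x x'; linarith
    have e3 : nug ρ g x' ≤ Fg ρ g (yn n) x' := nug_le ρ hg x' (yn n)
    have e4 : m0 ρ (zn n) ≤ m0 ρ (yn n) := m0_mono ρ hn
    have e6 : (x' - x) * m0 ρ (zn n) ≤ (x' - x) * m0 ρ (yn n) :=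
      mul_le_mul_of_nonneg_left e4 (by linarith)
    show Fg ρ g (zn n) x ≤ Fg ρ g (yn n) x + (Fg ρ g (zn n) x' - nug ρ g x')
    linarith

include hgC

lemma ysg_mono {x x' : ℝ} (hxx' : x ≤ x')
    (hnex : (Sg ρ g x ∩ msupp ρ).Nonempty) (hnex' : (Sg ρ g x' ∩ msupp ρ).Nonempty) :
    ysg ρ g x ≤ ysg ρ g x' := by
  have hmem := ysg_mem ρ hg hgC x hnex
  have hmem' := ysg_mem ρ hg hgC x' hnex'
  by_cases h : ysg ρ g x ≤ ysg ρ g x'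
  · exact h
  · push_neg at h
    have : ysg ρ g x' ∈ Sg ρ g x :=
      Sg_mono_key ρ hg hxx' hmem.1 hmem'.1 h
    exact csInf_le (Sg_bddBelow ρ hg hgC x) ⟨this, hmem'.2⟩

lemma ysg_left (x : ℝ) (hneAll : ∀ z, (Sg ρ g z ∩ msupp ρ).Nonempty) :
    Tendsto (fun ε => ysg ρ g (x - ε)) (𝓝[>] (0 : ℝ)) (𝓝 (ysg ρ g x)) := by
  have hmono : ∀ {a b : ℝ}, a ≤ b → ysg ρ g a ≤ ysg ρ g b :=
    fun {a b} hab => ysg_mono ρ hg hgC hab (hneAll a) (hneAll b)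
  have step1 : ∀ δ : ℝ, 0 < δ → ∃ ε₀ : ℝ, 0 < ε₀ ∧ ysg ρ g x - δ < ysg ρ g (x - ε₀) := by
    intro δ hδ
    by_contra hcon
    push_neg at hcon
    set yn : ℕ → ℝ := fun n => ysg ρ g (x - 1 / (n + 1)) with hyndef
    have hynmono : Monotone yn := by
      intro n m hnm
      have hc : (n : ℝ) ≤ (m : ℝ) := Nat.cast_le.2 hnm
      have h1 : (1 : ℝ) / (m + 1) ≤ 1 / (n + 1) := by
        apply one_div_le_one_div_of_le
        · positivity
        · linarith
      exact hmono (by linarith)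
    have hynbdd : BddAbove (Set.range yn) := by
      refine ⟨ysg ρ g x - δ, ?_⟩
      rintro v ⟨n, rfl⟩
      exact hcon (1 / (n + 1)) (by positivity)
    have hL := tendsto_atTop_ciSup hynmono hynbdd
    set L := ⨆ n, yn n with hLdef
    have hxn : Tendsto (fun n : ℕ => x - 1 / ((n : ℝ) + 1)) atTop (𝓝 x) := by
      have := tendsto_one_div_add_atTop_nhds_zero_nat.const_sub x
      simpa using this
    have hLmem : L ∈ Sg ρ g x ∩ msupp ρ := by
      have hmemn : ∀ n : ℕ, yn n ∈ Sg ρ g (x - 1 / (n + 1)) ∩ msupp ρ :=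
        fun n => ysg_mem ρ hg hgC _ (hneAll _)
      exact ⟨Sg_key ρ hg hxn hL (fun n => (hmemn n).1),
        msupp_mem_of_tendsto ρ hL (fun n => (hmemn n).2)⟩
    have h1 : ysg ρ g x ≤ L := csInf_le (Sg_bddBelow ρ hg hgC x) hLmem
    have h2 : L ≤ ysg ρ g x - δ := ciSup_le fun n => hcon (1 / (n + 1)) (by positivity)
    linarith
  rw [Metric.tendsto_nhds]
  intro δ hδ
  obtain ⟨ε₀, hε₀, hkey⟩ := step1 δ hδ
  have hIoo : Set.Ioo (0:ℝ) ε₀ ∈ 𝓝[>] (0:ℝ) :=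
    Ioo_mem_nhdsGT_of_mem ⟨le_refl (0:ℝ), hε₀⟩
  filter_upwards [hIoo] with ε hε
  have h1 : ysg ρ g (x - ε) ≤ ysg ρ g x := hmono (by linarith [hε.1])
  have h2 : ysg ρ g (x - ε₀) ≤ ysg ρ g (x - ε) := hmono (by linarith [hε.2])
  rw [Real.dist_eq, abs_lt]
  constructor <;> linarith

end Abstract

noncomputable def gfun (ρ : Measure ℝ) (u₀ : ℝ → ℝ) (τ t : ℝ) (η : ℝ) : ℝ :=
  η + u₀ η * (τ * (1 - Real.exp (-t / τ)))
    + mtilde ρ η * (τ ^ 2 - τ ^ 2 * Real.exp (-t / τ) - τ * t)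


section Glue

variable (ρ : Measure ℝ) [IsFiniteMeasure ρ] (u₀ : ℝ → ℝ) (U₀ τ t : ℝ)

lemma Fpot_eq (y x : ℝ) : Fpot ρ u₀ τ y x t = Fg ρ (gfun ρ u₀ τ t) y x := rfl

lemma Sset_eq (x : ℝ) : Sset ρ u₀ τ x t = Sg ρ (gfun ρ u₀ τ t) x := rfl

lemma ystar_eq (x : ℝ) : ystar ρ u₀ τ x t = ysg ρ (gfun ρ u₀ τ t) x := rfl

lemma gfun_int (hmom : Integrable (fun η : ℝ => η) ρ) (humeas : Measurable u₀)
    (hu : ∀ᵐ η ∂ρ, |u₀ η| ≤ U₀) : Integrable (gfun ρ u₀ τ t) ρ := by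
  set a := τ * (1 - Real.exp (-t / τ))
  set b := τ ^ 2 - τ ^ 2 * Real.exp (-t / τ) - τ * t
  have h1 : Integrable (fun η => u₀ η * a) ρ := by
    refine Integrable.mono' (integrable_const (U₀ * |a|))
      ((humeas.mul_const a).aestronglyMeasurable) ?_
    refine hu.mono fun η hη => ?_
    rw [Real.norm_eq_abs, abs_mul]
    exact mul_le_mul_of_nonneg_right hη (abs_nonneg a)
  have h2 : Integrable (fun η => mtilde ρ η * b) ρ := by
    refine Integrable.mono' (integrable_const (Mtot ρ * |b|))
      (((mtilde_measurable ρ).mul_const b).aestronglyMeasurable) ?_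
    refine Eventually.of_forall fun η => ?_
    rw [Real.norm_eq_abs, abs_mul]
    exact mul_le_mul_of_nonneg_right (abs_mtilde_le ρ η) (abs_nonneg b)
  exact (hmom.add h1).add h2

lemma gfun_bound (hu : ∀ᵐ η ∂ρ, |u₀ η| ≤ U₀) :
    ∀ᵐ η ∂ρ, gfun ρ u₀ τ t η ≤ η +
      (U₀ * |τ * (1 - Real.exp (-t / τ))| +
        Mtot ρ * |τ ^ 2 - τ ^ 2 * Real.exp (-t / τ) - τ * t|) := by
  set a := τ * (1 - Real.exp (-t / τ))
  set b := τ ^ 2 - τ ^ 2 * Real.exp (-t / τ) - τ * t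
  refine hu.mono fun η hη => ?_
  have h1 : u₀ η * a ≤ U₀ * |a| := by
    calc u₀ η * a ≤ |u₀ η * a| := le_abs_self _
      _ = |u₀ η| * |a| := abs_mul _ _
      _ ≤ U₀ * |a| := mul_le_mul_of_nonneg_right hη (abs_nonneg a)
  have h2 : mtilde ρ η * b ≤ Mtot ρ * |b| := by
    calc mtilde ρ η * b ≤ |mtilde ρ η * b| := le_abs_self _
      _ = |mtilde ρ η| * |b| := abs_mul _ _
      _ ≤ Mtot ρ * |b| := mul_le_mul_of_nonneg_right (abs_mtilde_le ρ η) (abs_nonneg b)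
  show η + u₀ η * a + mtilde ρ η * b ≤ _
  linarith

end Glue


theorem stmt9 (ρ : Measure ℝ) [IsFiniteMeasure ρ] (u₀ : ℝ → ℝ) (U₀ τ : ℝ)
    (hτ : 0 < τ) (hρ : ρ ≠ 0)
    (hmom : Integrable (fun η : ℝ => η) ρ) (humeas : Measurable u₀)
    (hu : ∀ᵐ η ∂ρ, |u₀ η| ≤ U₀)
    (hne : ∀ x t : ℝ, 0 < t → (Sset ρ u₀ τ x t ∩ msupp ρ).Nonempty)
    (ystarP : ℝ → ℝ → ℝ)
    (hP : ∀ x t : ℝ, 0 < t →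
      Tendsto (fun ε => ystar ρ u₀ τ (x + ε) t) (𝓝[>] (0 : ℝ)) (𝓝 (ystarP x t))) :
    ∀ x t : ℝ, 0 < t →
      Tendsto (fun ε => ystar ρ u₀ τ (x - ε) t) (𝓝[>] (0 : ℝ)) (𝓝 (ystar ρ u₀ τ x t)) ∧
      Tendsto (fun ε => ystarP (x - ε) t) (𝓝[>] (0 : ℝ)) (𝓝 (ystar ρ u₀ τ x t)) ∧
      Tendsto (fun ε => ystarP (x + ε) t) (𝓝[>] (0 : ℝ)) (𝓝 (ystarP x t)) := by
  intro x t ht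
  set g := gfun ρ u₀ τ t with hgdef
  have hg : Integrable g ρ := gfun_int ρ u₀ U₀ τ t hmom humeas hu
  have hgC : ∀ᵐ η ∂ρ, g η ≤ η +
      (U₀ * |τ * (1 - Real.exp (-t / τ))| +
        Mtot ρ * |τ ^ 2 - τ ^ 2 * Real.exp (-t / τ) - τ * t|) :=
    gfun_bound ρ u₀ U₀ τ t hu
  have hneAll : ∀ z, (Sg ρ g z ∩ msupp ρ).Nonempty := by
    intro z
    rw [← Sset_eq]
    exact hne z t ht
  have hyeq : ∀ z, ystar ρ u₀ τ z t = ysg ρ g z := fun z => rfl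
  have hmono : ∀ {z w : ℝ}, z ≤ w → ystar ρ u₀ τ z t ≤ ystar ρ u₀ τ w t := by
    intro z w hzw
    rw [hyeq z, hyeq w]
    exact ysg_mono ρ hg hgC hzw (hneAll z) (hneAll w)
  have part1 : Tendsto (fun ε => ystar ρ u₀ τ (x - ε) t) (𝓝[>] (0 : ℝ))
      (𝓝 (ystar ρ u₀ τ x t)) := by
    simp only [hyeq]
    exact ysg_left ρ hg hgC x hneAll
  -- basic ystarP inequalities
  have hPge : ∀ z : ℝ, ystar ρ u₀ τ z t ≤ ystarP z t := by
    intro z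
    refine ge_of_tendsto (hP z t ht) ?_
    filter_upwards [self_mem_nhdsWithin] with ε hε
    exact hmono (by simp at hε; linarith)
  have hPle : ∀ z w : ℝ, z < w → ystarP z t ≤ ystar ρ u₀ τ w t := by
    intro z w hzw
    refine le_of_tendsto (hP z t ht) ?_
    have hIoo : Set.Ioo (0:ℝ) (w - z) ∈ 𝓝[>] (0:ℝ) :=
      Ioo_mem_nhdsGT_of_mem ⟨le_refl (0:ℝ), by linarith⟩
    filter_upwards [hIoo] with ε hε
    exact hmono (by linarith [hε.2])
  refine ⟨part1, ?_, ?_⟩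
  · -- part 2
    refine tendsto_of_tendsto_of_tendsto_of_le_of_le'
      (g := fun ε => ystar ρ u₀ τ (x - ε) t) (h := fun _ => ystar ρ u₀ τ x t)
      part1 tendsto_const_nhds ?_ ?_
    · filter_upwards [self_mem_nhdsWithin] with ε hε
      exact hPge (x - ε)
    · filter_upwards [self_mem_nhdsWithin] with ε hε
      have : (0:ℝ) < ε := hε
      exact hPle (x - ε) x (by linarith)
  · -- part 3
    have h2 : Tendsto (fun ε : ℝ => 2 * ε) (𝓝[>] (0:ℝ)) (𝓝[>] (0:ℝ)) := by
      refine tendsto_nhdsWithin_of_tendsto_nhds_of_eventually_within _ ?_ ?_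
      · have : Tendsto (fun ε : ℝ => 2 * ε) (𝓝 (0:ℝ)) (𝓝 (2 * 0)) :=
          (continuous_const.mul continuous_id).tendsto 0
        simpa using this.mono_left nhdsWithin_le_nhds
      · filter_upwards [self_mem_nhdsWithin] with ε hε
        have : (0:ℝ) < ε := hε
        exact Set.mem_Ioi.2 (by linarith)
    have hupper : Tendsto (fun ε : ℝ => ystar ρ u₀ τ (x + 2 * ε) t) (𝓝[>] (0:ℝ))
        (𝓝 (ystarP x t)) := (hP x t ht).comp h2
    refine tendsto_of_tendsto_of_tendsto_of_le_of_le'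
      (g := fun ε => ystar ρ u₀ τ (x + ε) t)
      (h := fun ε => ystar ρ u₀ τ (x + 2 * ε) t)
      (hP x t ht) hupper ?_ ?_
    · filter_upwards [self_mem_nhdsWithin] with ε hε
      exact hPge (x + ε)
    · filter_upwards [self_mem_nhdsWithin] with ε hε
      have : (0:ℝ) < ε := hε
      exact hPle (x + ε) (x + 2 * ε) (by linarith)
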